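/- For every positive integer n, the slab of dimensions 3×(3n+2)×(3n+2) can be tiled by trominoes. -/

import Mathlib

/-- Standard basis vectors of `ℤ³`. -/
def e3 : Fin 3 → ℤ × ℤ × ℤ
  | 0 => (1, 0, 0)
  | 1 => (0, 1, 0)
  | 2 => (0, 0, 1)

/-- A 3D L-tromino: a cell together with two cells adjacent to it along two
different coordinate axes (equivalently, a translate/axis-rotation of
`{(0,0,0),(1,0,0),(0,1,0)}`). -/
def IsTromino3 (s : Finset (ℤ × ℤ × ℤ)) : Prop :=
  ∃ (c : ℤ × ℤ × ℤ) (i j : Fin 3) (ε₁ ε₂ : ℤ), i ≠ j ∧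
    (ε₁ = 1 ∨ ε₁ = -1) ∧ (ε₂ = 1 ∨ ε₂ = -1) ∧
    s = {c, c + ε₁ • e3 i, c + ε₂ • e3 j}

/-- The axis-aligned box `[0,a) × [0,b) × [0,c)` in `ℤ³`. -/
noncomputable def box (a b c : ℕ) : Finset (ℤ × ℤ × ℤ) :=
  (Finset.Ico (0 : ℤ) a) ×ˢ (Finset.Ico (0 : ℤ) b) ×ˢ (Finset.Ico (0 : ℤ) c)

/-- `T` is a tiling of the region `R` by 3D trominoes: the trominoes are
pairwise disjoint and their union is exactly `R`. -/
def IsTiling3 (R : Finset (ℤ × ℤ × ℤ)) (T : Finset (Finset (ℤ × ℤ × ℤ))) : Prop :=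
  (∀ t ∈ T, IsTromino3 t) ∧
    (∀ t₁ ∈ T, ∀ t₂ ∈ T, t₁ ≠ t₂ → Disjoint t₁ t₂) ∧
    (∀ x, x ∈ R ↔ ∃ t ∈ T, x ∈ t)

/-! The slab splits as `3 × (2 + 3n) × (2 + 3n) = 3 × 2 × (2 + 3n) ∪ 3 × 3n × 2 ∪ 3 × 3n × 3n`.
Bars `3 × 2 × 1` and `3 × 1 × 2` are unions of two trominoes, so stacking them tiles the first
two pieces; the last one is a grid of `3 × 3 × 3` cubes, each tiled by nine trominoes. -/

theorem isTromino3_image_add {t : Finset (ℤ × ℤ × ℤ)} (v : ℤ × ℤ × ℤ) (ht : IsTromino3 t) :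
    IsTromino3 (t.image (· + v)) := by
  obtain ⟨c, i, j, ε₁, ε₂, hij, h₁, h₂, rfl⟩ := ht
  refine ⟨c + v, i, j, ε₁, ε₂, hij, h₁, h₂, ?_⟩
  simp only [Finset.image_insert, Finset.image_singleton, add_right_comm c _ v]

theorem IsTiling3.subset {R : Finset (ℤ × ℤ × ℤ)} {T : Finset (Finset (ℤ × ℤ × ℤ))}
    (hT : IsTiling3 R T) {t : Finset (ℤ × ℤ × ℤ)} (ht : t ∈ T) : t ⊆ R :=
  fun x hx => (hT.2.2 x).2 ⟨t, ht, hx⟩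

def Tileable (R : Finset (ℤ × ℤ × ℤ)) : Prop := ∃ T, IsTiling3 R T

namespace Tileable

theorem empty : Tileable ∅ :=
  ⟨∅, by simp [IsTiling3]⟩

theorem of_eq_sup {R : Finset (ℤ × ℤ × ℤ)} {T : Finset (Finset (ℤ × ℤ × ℤ))}
    (htrom : ∀ t ∈ T, IsTromino3 t) (hdisj : (T : Set (Finset (ℤ × ℤ × ℤ))).PairwiseDisjoint id)
    (hR : R = T.sup id) : Tileable R :=
  ⟨T, htrom, fun _ h₁ _ h₂ hne => hdisj h₁ h₂ hne, fun x => by simp [hR, Finset.mem_sup]⟩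

theorem union {R R' : Finset (ℤ × ℤ × ℤ)} (hdisj : Disjoint R R') (hR : Tileable R)
    (hR' : Tileable R') : Tileable (R ∪ R') := by
  obtain ⟨T, hT⟩ := hR
  obtain ⟨T', hT'⟩ := hR'
  refine ⟨T ∪ T', ?_, ?_, ?_⟩
  · simp only [Finset.mem_union]
    rintro t (ht | ht)
    exacts [hT.1 t ht, hT'.1 t ht]
  · simp only [Finset.mem_union]
    rintro t₁ (h₁ | h₁) t₂ (h₂ | h₂) hne
    · exact hT.2.1 t₁ h₁ t₂ h₂ hne
    · exact hdisj.mono (hT.subset h₁) (hT'.subset h₂)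
    · exact hdisj.symm.mono (hT'.subset h₁) (hT.subset h₂)
    · exact hT'.2.1 t₁ h₁ t₂ h₂ hne
  · intro x
    simp only [Finset.mem_union, hT.2.2 x, hT'.2.2 x, or_and_right, exists_or]

theorem image {R : Finset (ℤ × ℤ × ℤ)} {f : ℤ × ℤ × ℤ → ℤ × ℤ × ℤ} (hf : Function.Injective f)
    (hfT : ∀ t, IsTromino3 t → IsTromino3 (t.image f)) (hR : Tileable R) :
    Tileable (R.image f) := by
  obtain ⟨T, htrom, hdisj, hcover⟩ := hR
  refine ⟨T.image (Finset.image f), ?_, ?_, ?_⟩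
  · simp only [Finset.forall_mem_image]
    exact fun t ht => hfT t (htrom t ht)
  · simp only [Finset.forall_mem_image]
    intro t₁ h₁ t₂ h₂ hne
    exact (Finset.disjoint_image hf).2 (hdisj t₁ h₁ t₂ h₂ fun h => hne (h ▸ rfl))
  · intro x
    simp only [Finset.mem_image, hcover]
    grind

theorem image_add {R : Finset (ℤ × ℤ × ℤ)} (v : ℤ × ℤ × ℤ) (hR : Tileable R) :
    Tileable (R.image (· + v)) :=
  hR.image (add_left_injective v) fun _ => isTromino3_image_add v

end Tileable

section BoxConcat

variable {a b c d : ℕ}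

theorem box_eq_union_image_add_z :
    box a b (c + d) = box a b c ∪ (box a b d).image (· + (0, 0, (c : ℤ))) := by
  ext ⟨x, y, z⟩
  simp only [box, Finset.mem_union, Finset.mem_image, Finset.mem_product, Finset.mem_Ico,
    Prod.exists, Prod.mk_add_mk, Prod.mk.injEq]
  constructor
  · rintro ⟨hx, hy, hz⟩
    by_cases hzc : z < c
    · exact Or.inl ⟨hx, hy, hz.1, hzc⟩
    · exact Or.inr ⟨x, y, z - c, ⟨hx, hy, by push_cast at hz ⊢; omega⟩, by omega, by omega,
        by omega⟩
  · rintro (⟨hx, hy, hz⟩ | ⟨p, q, r, ⟨hp, hq, hr⟩, rfl, rfl, rfl⟩)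
    · exact ⟨hx, hy, hz.1, by push_cast; omega⟩
    · exact ⟨by omega, by omega, by push_cast at hr ⊢; omega⟩

theorem box_eq_union_image_add_y :
    box a (b + c) d = box a b d ∪ (box a c d).image (· + (0, (b : ℤ), 0)) := by
  ext ⟨x, y, z⟩
  simp only [box, Finset.mem_union, Finset.mem_image, Finset.mem_product, Finset.mem_Ico,
    Prod.exists, Prod.mk_add_mk, Prod.mk.injEq]
  constructor
  · rintro ⟨hx, hy, hz⟩
    by_cases hyb : y < b
    · exact Or.inl ⟨hx, ⟨hy.1, hyb⟩, hz⟩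
    · exact Or.inr ⟨x, y - b, z, ⟨hx, by push_cast at hy ⊢; omega, hz⟩, by omega, by omega,
        by omega⟩
  · rintro (⟨hx, hy, hz⟩ | ⟨p, q, r, ⟨hp, hq, hr⟩, rfl, rfl, rfl⟩)
    · exact ⟨hx, ⟨hy.1, by push_cast; omega⟩, hz⟩
    · exact ⟨by omega, by push_cast at hq ⊢; omega, by omega⟩

theorem disjoint_box_image_add_z :
    Disjoint (box a b c) ((box a b d).image (· + (0, 0, (c : ℤ)))) := by
  simp only [Finset.disjoint_left, box, Finset.mem_image, Finset.mem_product, Finset.mem_Ico,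
    Prod.exists, Prod.forall, Prod.mk_add_mk, Prod.mk.injEq]
  omega

theorem disjoint_box_image_add_y :
    Disjoint (box a b d) ((box a c d).image (· + (0, (b : ℤ), 0))) := by
  simp only [Finset.disjoint_left, box, Finset.mem_image, Finset.mem_product, Finset.mem_Ico,
    Prod.exists, Prod.forall, Prod.mk_add_mk, Prod.mk.injEq]
  omega

theorem Tileable.box_add_z (h₁ : Tileable (box a b c)) (h₂ : Tileable (box a b d)) :
    Tileable (box a b (c + d)) := by
  rw [box_eq_union_image_add_z]
  exact h₁.union disjoint_box_image_add_z (h₂.image_add _)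

theorem Tileable.box_add_y (h₁ : Tileable (box a b d)) (h₂ : Tileable (box a c d)) :
    Tileable (box a (b + c) d) := by
  rw [box_eq_union_image_add_y]
  exact h₁.union disjoint_box_image_add_y (h₂.image_add _)

theorem Tileable.box_mul_z (h : Tileable (box a b c)) (k : ℕ) : Tileable (box a b (c * k)) := by
  induction k with
  | zero => simpa [box] using Tileable.empty
  | succ k ih => exact ih.box_add_z h

theorem Tileable.box_mul_y (h : Tileable (box a b c)) (k : ℕ) : Tileable (box a (b * k) c) := by
  induction k with
  | zero => simpa [box] using Tileable.empty
  | succ k ih => exact ih.box_add_y h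

end BoxConcat

/-- The witness data of `IsTromino3`, so that explicit tilings can be checked by `decide`. -/
structure TrominoSpec where
  corner : ℤ × ℤ × ℤ
  i : Fin 3
  j : Fin 3
  ε₁ : ℤ
  ε₂ : ℤ

namespace TrominoSpec

def cells (p : TrominoSpec) : Finset (ℤ × ℤ × ℤ) :=
  {p.corner, p.corner + p.ε₁ • e3 p.i, p.corner + p.ε₂ • e3 p.j}

def IsValid (p : TrominoSpec) : Prop :=
  p.i ≠ p.j ∧ (p.ε₁ = 1 ∨ p.ε₁ = -1) ∧ (p.ε₂ = 1 ∨ p.ε₂ = -1)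

instance : DecidablePred IsValid := fun _ => inferInstanceAs (Decidable (_ ∧ _))

theorem isTromino3_cells {p : TrominoSpec} (hp : p.IsValid) : IsTromino3 p.cells :=
  ⟨p.corner, p.i, p.j, p.ε₁, p.ε₂, hp.1, hp.2.1, hp.2.2, rfl⟩

end TrominoSpec

theorem Tileable.of_list {R : Finset (ℤ × ℤ × ℤ)} (L : List TrominoSpec)
    (hvalid : ∀ p ∈ L, p.IsValid)
    (hdisj : (L.map TrominoSpec.cells).Pairwise Disjoint)
    (hR : R = (L.map TrominoSpec.cells).toFinset.sup id) : Tileable R := by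
  refine of_eq_sup ?_ ?_ hR
  · simp only [List.mem_toFinset, List.mem_map]
    rintro _ ⟨p, hp, rfl⟩
    exact TrominoSpec.isTromino3_cells (hvalid p hp)
  · rw [Set.PairwiseDisjoint, List.coe_toFinset]
    exact hdisj.set_pairwise

theorem tileable_box_3_2_1 : Tileable (box 3 2 1) :=
  .of_list [⟨(0, 0, 0), 0, 1, 1, 1⟩, ⟨(2, 1, 0), 0, 1, -1, -1⟩] (by decide) (by decide)
    (by decide)

theorem tileable_box_3_1_2 : Tileable (box 3 1 2) :=
  .of_list [⟨(0, 0, 0), 0, 2, 1, 1⟩, ⟨(2, 0, 1), 0, 2, -1, -1⟩] (by decide) (by decide)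
    (by decide)

theorem tileable_box_3_3_3 : Tileable (box 3 3 3) :=
  .of_list [⟨(0, 0, 0), 0, 1, 1, 1⟩, ⟨(0, 0, 1), 0, 2, 1, 1⟩, ⟨(0, 1, 1), 0, 1, 1, 1⟩,
    ⟨(0, 1, 2), 0, 1, 1, 1⟩, ⟨(1, 2, 0), 0, 1, -1, -1⟩, ⟨(2, 0, 2), 0, 1, -1, 1⟩,
    ⟨(1, 2, 2), 0, 2, 1, -1⟩, ⟨(2, 0, 0), 1, 2, 1, 1⟩, ⟨(2, 2, 1), 1, 2, -1, -1⟩]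
    (by decide) (by decide) (by decide)

theorem tile_slab_two_general (n : ℕ) :
    ∃ T : Finset (Finset (ℤ × ℤ × ℤ)),
      IsTiling3 (box 3 (3 * n + 2) (3 * n + 2)) T := by
  have strip_y : Tileable (box 3 2 (2 + 3 * n)) := by
    simpa using tileable_box_3_2_1.box_mul_z (2 + 3 * n)
  have strip_z : Tileable (box 3 (3 * n) 2) := by
    simpa using tileable_box_3_1_2.box_mul_y (3 * n)
  have square : Tileable (box 3 (3 * n) (3 * n)) :=
    (tileable_box_3_3_3.box_mul_z n).box_mul_y n
  rw [add_comm (3 * n) 2]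
  exact strip_y.box_add_y (strip_z.box_add_z square)

/-- For every positive integer `n`, the `3×(3n+2)×(3n+2)` slab can be tiled. -/
theorem tile_slab_two (n : ℕ) (hn : 0 < n) :
    ∃ T : Finset (Finset (ℤ × ℤ × ℤ)),
      IsTiling3 (box 3 (3 * n + 2) (3 * n + 2)) T :=
  tile_slab_two_general n
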